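/- Let A, B, C, D, E, F be six pairwise non-proportional points of the conic K. If the Pascal lines of the arrays [[A,B,C],[F,E,D]] and [[A,B,C],[D,F,E]] coincide (the cross product of their Pascal vectors is zero), then the Pascal line of the array [[A,B,C],[E,D,F]] coincides with them as well: its Pascal vector has zero cross product with the Pascal vector of [[A,B,C],[F,E,D]]. -/

import Mathlib

open Matrix

namespace PascalStmt

noncomputable section

/-- Membership in the conic `K = {y : y₀y₂ = y₁²}`. -/
def OnK (y : Fin 3 → ℂ) : Prop := y 0 * y 2 = y 1 ^ 2

/-- The tangent line to `K` at a point `y` of `K`. -/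
def tangentK (y : Fin 3 → ℂ) : Fin 3 → ℂ := ![y 2, -(2 * y 1), y 0]

/-- First cross-hair point of the array `[[P₁,P₂,P₃],[P₄,P₅,P₆]]`. -/
def chX1 (P₁ P₂ P₃ P₄ P₅ P₆ : Fin 3 → ℂ) : Fin 3 → ℂ := (P₁ ⨯₃ P₅) ⨯₃ (P₂ ⨯₃ P₄)

/-- Second cross-hair point of the array `[[P₁,P₂,P₃],[P₄,P₅,P₆]]`. -/
def chX2 (P₁ P₂ P₃ P₄ P₅ P₆ : Fin 3 → ℂ) : Fin 3 → ℂ := (P₁ ⨯₃ P₆) ⨯₃ (P₃ ⨯₃ P₄)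

/-- Third cross-hair point of the array `[[P₁,P₂,P₃],[P₄,P₅,P₆]]`. -/
def chX3 (P₁ P₂ P₃ P₄ P₅ P₆ : Fin 3 → ℂ) : Fin 3 → ℂ := (P₂ ⨯₃ P₆) ⨯₃ (P₃ ⨯₃ P₅)

/-- The Pascal line vector of the array `[[P₁,P₂,P₃],[P₄,P₅,P₆]]`. -/
def pascalVec (P₁ P₂ P₃ P₄ P₅ P₆ : Fin 3 → ℂ) : Fin 3 → ℂ :=
  chX1 P₁ P₂ P₃ P₄ P₅ P₆ ⨯₃ chX2 P₁ P₂ P₃ P₄ P₅ P₆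

/-- Six points, pairwise non-proportional (in particular all nonzero). -/
def PairwiseNonProp (P : Fin 6 → (Fin 3 → ℂ)) : Prop :=
  ∀ i j, i ≠ j → ∀ c : ℂ, P i ≠ c • P j

/-! ### Auxiliary machinery -/

/-- The Veronese parametrization of the conic. -/
def nu (s t : ℂ) : Fin 3 → ℂ := ![s ^ 2, s * t, t ^ 2]

lemma cross_smul_left' (c : ℂ) (u v : Fin 3 → ℂ) : (c • u) ⨯₃ v = c • (u ⨯₃ v) := by
  rw [cross_apply, cross_apply]
  funext i
  fin_cases i <;> simp <;> ring

lemma cross_smul_right' (c : ℂ) (u v : Fin 3 → ℂ) : u ⨯₃ (c • v) = c • (u ⨯₃ v) := by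
  rw [cross_apply, cross_apply]
  funext i
  fin_cases i <;> simp <;> ring

lemma smul_cross_smul (c d : ℂ) (u v : Fin 3 → ℂ) :
    (c • u) ⨯₃ (d • v) = (c * d) • (u ⨯₃ v) := by
  rw [cross_smul_left', cross_smul_right', smul_smul]

lemma cross_add_left' (u v w : Fin 3 → ℂ) : (u + v) ⨯₃ w = u ⨯₃ w + v ⨯₃ w := by
  rw [cross_apply, cross_apply, cross_apply]
  funext i
  fin_cases i <;> simp <;> ring

lemma cross_neg_left' (u w : Fin 3 → ℂ) : (-u) ⨯₃ w = -(u ⨯₃ w) := by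
  rw [cross_apply, cross_apply]
  funext i
  fin_cases i <;> simp <;> ring

/-- Every nonzero point of the conic is a scalar multiple of a Veronese point. -/
lemma repr_onK (y : Fin 3 → ℂ) (hy : OnK y) (h0 : y ≠ 0) :
    ∃ c s t : ℂ, c ≠ 0 ∧ y = c • nu s t := by
  unfold OnK at hy
  by_cases h : y 0 = 0
  · have h1 : y 1 = 0 := by
      have : y 1 ^ 2 = 0 := by rw [← hy, h, zero_mul]
      exact pow_eq_zero_iff (n := 2) (by norm_num) |>.mp this
    have h2 : y 2 ≠ 0 := by
      intro hc
      apply h0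
      funext i
      fin_cases i <;> simp [h, h1, hc]
    refine ⟨(y 2)⁻¹, 0, y 2, inv_ne_zero h2, ?_⟩
    funext i
    fin_cases i
    · simp [nu, h]
    · simp [nu, h1]
    · show y 2 = (y 2)⁻¹ • (nu 0 (y 2) 2)
      simp [nu]
      field_simp
  · refine ⟨(y 0)⁻¹, y 0, y 1, inv_ne_zero h, ?_⟩
    funext i
    fin_cases i
    · show y 0 = (y 0)⁻¹ • (nu (y 0) (y 1) 0)
      simp [nu]
      field_simp
    · show y 1 = (y 0)⁻¹ • (nu (y 0) (y 1) 1)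
      simp [nu]
      field_simp
    · show y 2 = (y 0)⁻¹ • (nu (y 0) (y 1) 2)
      simp [nu]
      field_simp
      linear_combination hy

/-- If the bracket of two parameter pairs vanishes, the Veronese points are proportional. -/
lemma nu_prop (s t u v : ℂ) (h : s * v - u * t = 0) (h0 : ¬(u = 0 ∧ v = 0)) :
    ∃ k : ℂ, nu s t = k • nu u v := by
  by_cases hu : u = 0
  · have hv : v ≠ 0 := fun hc => h0 ⟨hu, hc⟩
    have hs : s = 0 := by
      have : s * v = 0 := by rw [hu] at h; linear_combination h
      rcases mul_eq_zero.mp this with h' | h'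
      · exact h'
      · exact absurd h' hv
    refine ⟨(t * v⁻¹) ^ 2, ?_⟩
    funext i
    fin_cases i
    · simp [nu, hu, hs]
    · simp [nu, hu, hs]
    · show t ^ 2 = (t * v⁻¹) ^ 2 • (nu u v 2)
      simp [nu]
      field_simp
  · refine ⟨(s * u⁻¹) ^ 2, ?_⟩
    have hsv : s * v = u * t := by linear_combination h
    funext i
    fin_cases i
    · show s ^ 2 = (s * u⁻¹) ^ 2 • (nu u v 0)
      simp [nu]
      field_simp
    · show s * t = (s * u⁻¹) ^ 2 • (nu u v 1)
      simp [nu]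
      field_simp
      linear_combination (-s) * hsv
    · show t ^ 2 = (s * u⁻¹) ^ 2 • (nu u v 2)
      simp [nu]
      field_simp
      linear_combination (-(s * v + u * t)) * hsv

/-- Nonvanishing of brackets for non-proportional conic points. -/
lemma bracket_ne (X Y : Fin 3 → ℂ) (x y sX tX sY tY : ℂ)
    (hx : x ≠ 0) (hy : y ≠ 0)
    (hX : X = x • nu sX tX) (hY : Y = y • nu sY tY)
    (hY0 : Y ≠ 0) (hnp : ∀ c : ℂ, X ≠ c • Y) :
    sX * tY - sY * tX ≠ 0 := by
  intro h
  have h0 : ¬(sY = 0 ∧ tY = 0) := by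
    rintro ⟨h1, h2⟩
    apply hY0
    rw [hY]
    funext i
    fin_cases i <;> simp [nu, h1, h2]
  obtain ⟨k, hk⟩ := nu_prop sX tX sY tY h h0
  apply hnp (x * k * y⁻¹)
  rw [hX, hY, hk, smul_smul, smul_smul]
  congr 1
  field_simp

def m1 (sA tA sB tB sC tC sD tD sE tE sF tF : ℂ) : Fin 3 → ℂ :=
  ![ -sA * tB * tC * sD * tE * tF + sA * tB * tC * tD * sE * tF + tA * sB * tC * sD * tE * tF - tA * sB * tC * tD * tE * sF - tA * tB * sC * tD * sE * tF + tA * tB * sC * tD * tE * sF,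
     -sA * sB * tC * tD * sE * tF + sA * sB * tC * tD * tE * sF + sA * tB * sC * sD * tE * tF - sA * tB * sC * tD * tE * sF + sA * tB * tC * sD * tE * sF - sA * tB * tC * tD * sE * sF - tA * sB * sC * sD * tE * tF + tA * sB * sC * tD * sE * tF - tA * sB * tC * sD * sE * tF + tA * sB * tC * tD * sE * sF + tA * tB * sC * sD * sE * tF - tA * tB * sC * sD * tE * sF,
     sA * sB * tC * sD * sE * tF - sA * sB * tC * sD * tE * sF - sA * tB * sC * sD * sE * tF + sA * tB * sC * tD * sE * sF + tA * sB * sC * sD * tE * sF - tA * sB * sC * tD * sE * sF ]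

def m2 (sA tA sB tB sC tC sD tD sE tE sF tF : ℂ) : Fin 3 → ℂ :=
  ![ -sA * tB * tC * tD * sE * tF + sA * tB * tC * tD * tE * sF - tA * sB * tC * sD * tE * tF + tA * sB * tC * tD * sE * tF + tA * tB * sC * sD * tE * tF - tA * tB * sC * tD * tE * sF,
     sA * sB * tC * sD * tE * tF - sA * sB * tC * tD * tE * sF - sA * tB * sC * sD * tE * tF + sA * tB * sC * tD * sE * tF + sA * tB * tC * sD * sE * tF - sA * tB * tC * sD * tE * sF - tA * sB * sC * tD * sE * tF + tA * sB * sC * tD * tE * sF + tA * sB * tC * sD * tE * sF - tA * sB * tC * tD * sE * sF - tA * tB * sC * sD * sE * tF + tA * tB * sC * tD * sE * sF,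
     -sA * sB * tC * sD * sE * tF + sA * sB * tC * tD * sE * sF + sA * tB * sC * sD * tE * sF - sA * tB * sC * tD * sE * sF + tA * sB * sC * sD * sE * tF - tA * sB * sC * sD * tE * sF ]

def m3 (sA tA sB tB sC tC sD tD sE tE sF tF : ℂ) : Fin 3 → ℂ :=
  ![ sA * tB * tC * sD * tE * tF - sA * tB * tC * tD * tE * sF - tA * sB * tC * tD * sE * tF + tA * sB * tC * tD * tE * sF - tA * tB * sC * sD * tE * tF + tA * tB * sC * tD * sE * tF,
     -sA * sB * tC * sD * tE * tF + sA * sB * tC * tD * sE * tF - sA * tB * sC * tD * sE * tF + sA * tB * sC * tD * tE * sF - sA * tB * tC * sD * sE * tF + sA * tB * tC * tD * sE * sF + tA * sB * sC * sD * tE * tF - tA * sB * sC * tD * tE * sF + tA * sB * tC * sD * sE * tF - tA * sB * tC * sD * tE * sF + tA * tB * sC * sD * tE * sF - tA * tB * sC * tD * sE * sF,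
     sA * sB * tC * sD * tE * sF - sA * sB * tC * tD * sE * sF + sA * tB * sC * sD * sE * tF - sA * tB * sC * sD * tE * sF - tA * sB * sC * sD * sE * tF + tA * sB * sC * tD * sE * sF ]

lemma m_sum (sA tA sB tB sC tC sD tD sE tE sF tF : ℂ) :
    m3 sA tA sB tB sC tC sD tD sE tE sF tF
      = -(m1 sA tA sB tB sC tC sD tD sE tE sF tF)
        - m2 sA tA sB tB sC tC sD tD sE tE sF tF := by
  funext i
  fin_cases i <;> simp [m1, m2, m3] <;> ring

lemma fact1 (a b c d e f sA tA sB tB sC tC sD tD sE tE sF tF : ℂ) :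
    pascalVec (a • nu sA tA) (b • nu sB tB) (c • nu sC tC)
      (f • nu sF tF) (e • nu sE tE) (d • nu sD tD)
    = (a ^ 2 * b * c * f ^ 2 * e * d *
        ((sA * tD - sD * tA) * (sA * tE - sE * tA) * (sA * tF - sF * tA) *
          (sB * tF - sF * tB) * (sC * tF - sF * tC)))
        • m1 sA tA sB tB sC tC sD tD sE tE sF tF := by
  funext i
  fin_cases i <;>
    simp [pascalVec, chX1, chX2, cross_apply, nu, m1] <;> ring

lemma fact2 (a b c d e f sA tA sB tB sC tC sD tD sE tE sF tF : ℂ) :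
    pascalVec (a • nu sA tA) (b • nu sB tB) (c • nu sC tC)
      (d • nu sD tD) (f • nu sF tF) (e • nu sE tE)
    = (a ^ 2 * b * c * d ^ 2 * f * e *
        ((sA * tD - sD * tA) * (sA * tE - sE * tA) * (sA * tF - sF * tA) *
          (sB * tD - sD * tB) * (sC * tD - sD * tC)))
        • m2 sA tA sB tB sC tC sD tD sE tE sF tF := by
  funext i
  fin_cases i <;>
    simp [pascalVec, chX1, chX2, cross_apply, nu, m2] <;> ring

lemma fact3 (a b c d e f sA tA sB tB sC tC sD tD sE tE sF tF : ℂ) :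
    pascalVec (a • nu sA tA) (b • nu sB tB) (c • nu sC tC)
      (e • nu sE tE) (d • nu sD tD) (f • nu sF tF)
    = (a ^ 2 * b * c * e ^ 2 * d * f *
        ((sA * tD - sD * tA) * (sA * tE - sE * tA) * (sA * tF - sF * tA) *
          (sB * tE - sE * tB) * (sC * tE - sE * tC)))
        • m3 sA tA sB tB sC tC sD tD sE tE sF tF := by
  funext i
  fin_cases i <;>
    simp [pascalVec, chX1, chX2, cross_apply, nu, m3] <;> ring

theorem coincide_implies_third_pascal
    (A B C D E F : Fin 3 → ℂ)
    (hdist : PairwiseNonProp ![A, B, C, D, E, F])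
    (hKA : OnK A) (hKB : OnK B) (hKC : OnK C)
    (hKD : OnK D) (hKE : OnK E) (hKF : OnK F)
    (hcoin : pascalVec A B C F E D ⨯₃ pascalVec A B C D F E = 0) :
    pascalVec A B C E D F ⨯₃ pascalVec A B C F E D = 0 := by
  -- all six points are nonzero
  have hA0 : A ≠ 0 := by simpa using hdist 0 1 (by decide) 0
  have hB0 : B ≠ 0 := by simpa using hdist 1 0 (by decide) 0
  have hC0 : C ≠ 0 := by simpa using hdist 2 0 (by decide) 0
  have hD0 : D ≠ 0 := by simpa using hdist 3 0 (by decide) 0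
  have hE0 : E ≠ 0 := by simpa using hdist 4 0 (by decide) 0
  have hF0 : F ≠ 0 := by simpa using hdist 5 0 (by decide) 0
  -- parametrize the six points
  obtain ⟨a, sA, tA, ha, hA⟩ := repr_onK A hKA hA0
  obtain ⟨b, sB, tB, hb, hB⟩ := repr_onK B hKB hB0
  obtain ⟨c, sC, tC, hc, hC⟩ := repr_onK C hKC hC0
  obtain ⟨d, sD, tD, hd, hD⟩ := repr_onK D hKD hD0
  obtain ⟨e, sE, tE, he, hE⟩ := repr_onK E hKE hE0
  obtain ⟨f, sF, tF, hf, hF⟩ := repr_onK F hKF hF0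
  -- the relevant brackets are nonzero
  have brAD : sA * tD - sD * tA ≠ 0 :=
    bracket_ne A D a d sA tA sD tD ha hd hA hD hD0
      (fun k => by simpa using hdist 0 3 (by decide) k)
  have brAE : sA * tE - sE * tA ≠ 0 :=
    bracket_ne A E a e sA tA sE tE ha he hA hE hE0
      (fun k => by simpa using hdist 0 4 (by decide) k)
  have brAF : sA * tF - sF * tA ≠ 0 :=
    bracket_ne A F a f sA tA sF tF ha hf hA hF hF0
      (fun k => by simpa using hdist 0 5 (by decide) k)
  have brBD : sB * tD - sD * tB ≠ 0 :=
    bracket_ne B D b d sB tB sD tD hb hd hB hD hD0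
      (fun k => by simpa using hdist 1 3 (by decide) k)
  have brBE : sB * tE - sE * tB ≠ 0 :=
    bracket_ne B E b e sB tB sE tE hb he hB hE hE0
      (fun k => by simpa using hdist 1 4 (by decide) k)
  have brBF : sB * tF - sF * tB ≠ 0 :=
    bracket_ne B F b f sB tB sF tF hb hf hB hF hF0
      (fun k => by simpa using hdist 1 5 (by decide) k)
  have brCD : sC * tD - sD * tC ≠ 0 :=
    bracket_ne C D c d sC tC sD tD hc hd hC hD hD0
      (fun k => by simpa using hdist 2 3 (by decide) k)
  have brCE : sC * tE - sE * tC ≠ 0 :=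
    bracket_ne C E c e sC tC sE tE hc he hC hE hE0
      (fun k => by simpa using hdist 2 4 (by decide) k)
  have brCF : sC * tF - sF * tC ≠ 0 :=
    bracket_ne C F c f sC tC sF tF hc hf hC hF hF0
      (fun k => by simpa using hdist 2 5 (by decide) k)
  set M1 := m1 sA tA sB tB sC tC sD tD sE tE sF tF with hM1
  set M2 := m2 sA tA sB tB sC tC sD tD sE tE sF tF with hM2
  set M3 := m3 sA tA sB tB sC tC sD tD sE tE sF tF with hM3
  set σ1 : ℂ := a ^ 2 * b * c * f ^ 2 * e * d *
      ((sA * tD - sD * tA) * (sA * tE - sE * tA) * (sA * tF - sF * tA) *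
        (sB * tF - sF * tB) * (sC * tF - sF * tC)) with hσ1
  set σ2 : ℂ := a ^ 2 * b * c * d ^ 2 * f * e *
      ((sA * tD - sD * tA) * (sA * tE - sE * tA) * (sA * tF - sF * tA) *
        (sB * tD - sD * tB) * (sC * tD - sD * tC)) with hσ2
  set σ3 : ℂ := a ^ 2 * b * c * e ^ 2 * d * f *
      ((sA * tD - sD * tA) * (sA * tE - sE * tA) * (sA * tF - sF * tA) *
        (sB * tE - sE * tB) * (sC * tE - sE * tC)) with hσ3
  have hσ1ne : σ1 ≠ 0 := by
    simp only [hσ1]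
    exact mul_ne_zero
      (mul_ne_zero (mul_ne_zero (mul_ne_zero (mul_ne_zero (mul_ne_zero
        (pow_ne_zero 2 ha) hb) hc) (pow_ne_zero 2 hf)) he) hd)
      (mul_ne_zero (mul_ne_zero (mul_ne_zero (mul_ne_zero brAD brAE) brAF) brBF) brCF)
  have hσ2ne : σ2 ≠ 0 := by
    simp only [hσ2]
    exact mul_ne_zero
      (mul_ne_zero (mul_ne_zero (mul_ne_zero (mul_ne_zero (mul_ne_zero
        (pow_ne_zero 2 ha) hb) hc) (pow_ne_zero 2 hd)) hf) he)
      (mul_ne_zero (mul_ne_zero (mul_ne_zero (mul_ne_zero brAD brAE) brAF) brBD) brCD)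
  have e1 : pascalVec A B C F E D = σ1 • M1 := by
    rw [hA, hB, hC, hD, hE, hF]; exact fact1 a b c d e f sA tA sB tB sC tC sD tD sE tE sF tF
  have e2 : pascalVec A B C D F E = σ2 • M2 := by
    rw [hA, hB, hC, hD, hE, hF]; exact fact2 a b c d e f sA tA sB tB sC tC sD tD sE tE sF tF
  have e3 : pascalVec A B C E D F = σ3 • M3 := by
    rw [hA, hB, hC, hD, hE, hF]; exact fact3 a b c d e f sA tA sB tB sC tC sD tD sE tE sF tF
  rw [e1, e2, smul_cross_smul] at hcoin
  have hM12 : M1 ⨯₃ M2 = 0 := by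
    rcases smul_eq_zero.mp hcoin with h | h
    · exact absurd h (mul_ne_zero hσ1ne hσ2ne)
    · exact h
  rw [e3, e1, smul_cross_smul]
  have hM31 : M3 ⨯₃ M1 = 0 := by
    have hsum : M3 = -M1 - M2 := m_sum sA tA sB tB sC tC sD tD sE tE sF tF
    rw [hsum, sub_eq_add_neg, cross_add_left', cross_neg_left', cross_neg_left',
      cross_self, cross_anticomm M2 M1, hM12]
    simp
  rw [hM31, smul_zero]

end

end PascalStmt
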